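/- arXiv:1504.04494 — 7 statements merged into one kernel-verified Lean document; each statement's English description precedes it below -/
import Mathlib

section
/- Fix a finite field 𝔽, an index coding instance with t receivers and side-information sets 𝐒_i, message lengths l_1,…,l_t, and nonnegative integers l_k, l_{k_1},…,l_{k_t}. There exists a linear zero-error perfectly secure index code over 𝔽 with message lengths l_1,…,l_t, common key length l_k, private key lengths l_{k_1},…,l_{k_t}, some private randomness length l_w and some code length l, if and only if there exists a conventional zero-error linear index code over 𝔽 (no keys, no secrecy requirement) for the same side-information structure with message lengths [l_1 − l_{k_1}]_+, …, [l_t − l_{k_t}]_+ and code length l_k. -/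
/-!
For a linear encoder `(m, x) ↦ A m + B x` of messages `m` and keys/randomness `x`, perfect
secrecy says exactly that `range A ≤ range B`: the fibres over a code word are then translates of
one another, and conversely the fibre of every message over `0` is as large as that of the zero
message, hence nonempty.

Given a secure code, lift `A` linearly through `B` to get keys `L m` with `A m + B (L m) = 0`.
Receiver `i` then decodes `m i` from the zero code word, its side information, the common key
`(L m).1` and its private key `(L m).2.1 i`. The private key enters linearly through a space of
dimension at most `lki i`; projecting it away leaves `li i - lki i` dimensions of `m i` that are
decoded from the side information and a common key of length `lk` alone, which is a conventional
code with code word the common key.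

Conversely, a conventional code with code length `lk` gives a secure one by a one-time pad: the
first `min (li i) (lki i)` symbols of `m i` are sent masked by the private key of receiver `i`,
and the code word of the remaining symbols is sent masked by the common key.
-/

/-- A zero-error perfectly secure *linear* index code over the finite field `𝔽` for the
side-information structure `S` on `t` receivers.  Messages, keys, private randomness and
the public code word are vectors over `𝔽` of lengths `li i`, `lk`, `lki i`, `lw`, `l`,
and the encoder and all decoders are `𝔽`-linear maps.  Perfect secrecy is expressed by
equality, for every code word, of the counts of key/randomness tuples producing it. -/
structure LinSecureCode (𝔽 : Type) [Field 𝔽] [Fintype 𝔽]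
    (t : ℕ) (S : Fin t → Finset (Fin t)) where
  li : Fin t → ℕ
  lk : ℕ
  lki : Fin t → ℕ
  lw : ℕ
  l : ℕ
  enc : ((∀ i, Fin (li i) → 𝔽) × (Fin lk → 𝔽) × (∀ i, Fin (lki i) → 𝔽) × (Fin lw → 𝔽))
    →ₗ[𝔽] (Fin l → 𝔽)
  dec : ∀ i : Fin t,
    ((Fin l → 𝔽) × (∀ j : {x // x ∈ S i}, Fin (li j.1) → 𝔽) × (Fin lk → 𝔽)
        × (Fin (lki i) → 𝔽))
      →ₗ[𝔽] (Fin (li i) → 𝔽)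
  zeroError : ∀ (m : ∀ i, Fin (li i) → 𝔽) (k : Fin lk → 𝔽) (kp : ∀ i, Fin (lki i) → 𝔽)
      (w : Fin lw → 𝔽) (i : Fin t),
    dec i (enc (m, k, kp, w), (fun j => m j.1), k, kp i) = m i
  secrecy : ∀ (m m' : ∀ i, Fin (li i) → 𝔽) (c : Fin l → 𝔽),
    Nat.card {x : (Fin lk → 𝔽) × (∀ i, Fin (lki i) → 𝔽) × (Fin lw → 𝔽) //
        enc (m, x.1, x.2.1, x.2.2) = c}
      = Nat.card {x : (Fin lk → 𝔽) × (∀ i, Fin (lki i) → 𝔽) × (Fin lw → 𝔽) //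
        enc (m', x.1, x.2.1, x.2.2) = c}

/-- A conventional zero-error *linear* index code (no keys, no secrecy requirement) with
message lengths `li i` and code length `l`. -/
structure LinConvCode (𝔽 : Type) [Field 𝔽] [Fintype 𝔽]
    (t : ℕ) (S : Fin t → Finset (Fin t)) where
  li : Fin t → ℕ
  l : ℕ
  enc : (∀ i, Fin (li i) → 𝔽) →ₗ[𝔽] (Fin l → 𝔽)
  dec : ∀ i : Fin t,
    ((Fin l → 𝔽) × (∀ j : {x // x ∈ S i}, Fin (li j.1) → 𝔽)) →ₗ[𝔽] (Fin (li i) → 𝔽)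
  zeroError : ∀ (m : ∀ i, Fin (li i) → 𝔽) (i : Fin t),
    dec i (enc m, (fun j => m j.1)) = m i

open LinearMap Module

section PerfectSecrecy

variable {K M X C : Type*} [Ring K] [AddCommGroup M] [Module K M] [AddCommGroup X] [Module K X]
  [AddCommGroup C] [Module K C]

theorem LinearMap.apply_prod_eq_add (f : M × X →ₗ[K] C) (m : M) (x : X) :
    f (m, x) = f (inl K M X m) + f (inr K M X x) := by
  rw [← map_add, inl_apply, inr_apply, Prod.mk_add_mk, add_zero, zero_add]

theorem LinearMap.card_fiber_eq_iff_range_le [Finite X] (f : M × X →ₗ[K] C) :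
    (∀ m m' c, Nat.card {x // f (m, x) = c} = Nat.card {x // f (m', x) = c}) ↔
      range (f ∘ₗ inl K M X) ≤ range (f ∘ₗ inr K M X) := by
  constructor
  · rintro h _ ⟨m, rfl⟩
    have hpos : 0 < Nat.card {x // f (m, x) = 0} :=
      h 0 m 0 ▸ Nat.card_pos_iff.2 ⟨⟨⟨0, map_zero f⟩⟩, inferInstance⟩
    obtain ⟨⟨x, hx⟩⟩ := (Nat.card_pos_iff.1 hpos).1
    rw [apply_prod_eq_add] at hx
    exact ⟨-x, by
      simpa only [comp_apply, map_neg] using (eq_neg_of_add_eq_zero_left hx).symm⟩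
  · intro h m m' c
    obtain ⟨d, hd⟩ := h ⟨m - m', rfl⟩
    refine Nat.card_congr (Equiv.subtypeEquiv (Equiv.addRight d) fun x => ?_)
    simp only [comp_apply, map_sub] at hd
    rw [Equiv.coe_addRight, apply_prod_eq_add, apply_prod_eq_add f m', map_add, map_add, hd]
    abel_nf

end PerfectSecrecy

section DivisionRing

variable {K : Type*} [DivisionRing K]

theorem LinearMap.exists_apply_eq_zero_of_range_le {M X C : Type*} [AddCommGroup M] [Module K M]
    [AddCommGroup X] [Module K X] [AddCommGroup C] [Module K C] (f : M × X →ₗ[K] C)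
    (h : range (f ∘ₗ inl K M X) ≤ range (f ∘ₗ inr K M X)) :
    ∃ L : M →ₗ[K] X, ∀ m, f (m, L m) = 0 := by
  obtain ⟨L, hL⟩ := projective_lifting_property (f ∘ₗ inr K M X).rangeRestrict
    (codRestrict (f ∘ₗ inr K M X).range (-(f ∘ₗ inl K M X)) fun m =>
      neg_mem (h ⟨m, rfl⟩))
    (f ∘ₗ inr K M X).surjective_rangeRestrict
  refine ⟨L, fun m => ?_⟩
  have hLm : f (inr K M X (L m)) = -f (inl K M X m) := congr($(LinearMap.congr_fun hL m).1)
  rw [apply_prod_eq_add, hLm, add_neg_cancel]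

theorem LinearMap.exists_retraction_comp_eq_zero {a n : ℕ}
    (T : (Fin a → K) →ₗ[K] (Fin n → K)) :
    ∃ (ρ : (Fin n → K) →ₗ[K] (Fin (n - a) → K)) (e : (Fin (n - a) → K) →ₗ[K] (Fin n → K)),
      ρ ∘ₗ e = id ∧ ρ ∘ₗ T = 0 := by
  set Q := (Fin n → K) ⧸ range T
  have hQ : n - a ≤ finrank K Q := by
    have hsum : finrank K Q + finrank K (range T) = n := by
      simpa using (range T).finrank_quotient_add_finrank
    have hrange := T.finrank_range_le
    rw [finrank_fin_fun] at hrange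
    omega
  let ρ : (Fin n → K) →ₗ[K] (Fin (n - a) → K) := funLeft K K (Fin.castLE hQ) ∘ₗ
    (LinearEquiv.ofFinrankEq Q _ (finrank_fin_fun K).symm).toLinearMap ∘ₗ (range T).mkQ
  have hρ : Function.Surjective ρ :=
    (funLeft_surjective_of_injective K K _ (Fin.castLE_injective hQ)).comp
      ((LinearEquiv.surjective _).comp (range T).mkQ_surjective)
  obtain ⟨e, he⟩ := ρ.exists_rightInverse_of_surjective (range_eq_top.2 hρ)
  refine ⟨ρ, e, he, LinearMap.ext fun x => ?_⟩
  have hTx : (range T).mkQ (T x) = 0 := (Submodule.Quotient.mk_eq_zero _).2 (mem_range_self T x)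
  simp only [ρ, comp_apply, hTx, map_zero, zero_apply]

end DivisionRing

namespace OneTimePad

abbrev Codeword (K : Type*) {t : ℕ} (li lki : Fin t → ℕ) (lk : ℕ) : Type _ :=
  (∀ i, Fin (min (li i) (lki i)) → K) × (Fin lk → K)

variable {K : Type*} [CommRing K]

def splitEquiv (n k : ℕ) : (Fin n → K) ≃ₗ[K] (Fin (min n k) → K) × (Fin (n - k) → K) :=
  LinearEquiv.funCongrLeft K K (finSumFinEquiv.trans (finCongr (by omega))) ≪≫ₗ
    LinearEquiv.sumArrowLequivProdArrow _ _ K K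

def truncate {a b : ℕ} (h : a ≤ b) : (Fin b → K) →ₗ[K] (Fin a → K) :=
  funLeft K K (Fin.castLE h)

def prefixes {ι : Type*} (n k : ι → ℕ) :
    (∀ j, Fin (n j) → K) →ₗ[K] (∀ j, Fin (min (n j) (k j)) → K) :=
  pi fun j => fst K _ _ ∘ₗ (splitEquiv (n j) (k j)).toLinearMap ∘ₗ proj j

def suffixes {ι : Type*} (n k : ι → ℕ) :
    (∀ j, Fin (n j) → K) →ₗ[K] (∀ j, Fin (n j - k j) → K) :=
  pi fun j => snd K _ _ ∘ₗ (splitEquiv (n j) (k j)).toLinearMap ∘ₗ proj j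

variable {t lk : ℕ} {li lki : Fin t → ℕ}

variable {W : Type*} [AddCommGroup W] [Module K W]

def enc (f : (∀ i, Fin (li i - lki i) → K) →ₗ[K] (Fin lk → K)) :
    ((∀ i, Fin (li i) → K) × (Fin lk → K) × (∀ i, Fin (lki i) → K) × W) →ₗ[K]
      Codeword K li lki lk :=
  prod
    (prefixes li lki ∘ₗ fst K _ _ +
      (pi fun i => truncate (min_le_right _ _) ∘ₗ proj i) ∘ₗ fst K _ _ ∘ₗ snd K _ _ ∘ₗ snd K _ _)
    (f ∘ₗ suffixes li lki ∘ₗ fst K _ _ + fst K _ _ ∘ₗ snd K _ _)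

theorem enc_apply (f : (∀ i, Fin (li i - lki i) → K) →ₗ[K] (Fin lk → K)) m k kp (w : W) :
    enc f (m, k, kp, w) =
      (fun i => prefixes li lki m i + truncate (min_le_right _ _) (kp i),
        f (suffixes li lki m) + k) :=
  rfl

def dec {S : Finset (Fin t)} (i : Fin t)
    (g : ((Fin lk → K) × (∀ j : {x // x ∈ S}, Fin (li j.1 - lki j.1) → K)) →ₗ[K]
      (Fin (li i - lki i) → K)) :
    (Codeword K li lki lk × (∀ j : {x // x ∈ S}, Fin (li j.1) → K) × (Fin lk → K) ×
      (Fin (lki i) → K)) →ₗ[K] (Fin (li i) → K) :=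
  (splitEquiv (li i) (lki i)).symm.toLinearMap ∘ₗ prod
    (proj (φ := fun i => Fin (min (li i) (lki i)) → K) i ∘ₗ fst K _ _ ∘ₗ fst K _ _ -
      truncate (min_le_right _ _) ∘ₗ snd K _ _ ∘ₗ snd K _ _ ∘ₗ snd K _ _)
    (g ∘ₗ prod (snd K _ _ ∘ₗ fst K _ _ - fst K _ _ ∘ₗ snd K _ _ ∘ₗ snd K _ _)
      (suffixes (fun j : {x // x ∈ S} => li j) (fun j => lki j) ∘ₗ
        fst K _ _ ∘ₗ snd K _ _))

theorem dec_apply {S : Finset (Fin t)} (i : Fin t)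
    (g : ((Fin lk → K) × (∀ j : {x // x ∈ S}, Fin (li j.1 - lki j.1) → K)) →ₗ[K]
      (Fin (li i - lki i) → K)) c s k κ :
    dec i g (c, s, k, κ) = (splitEquiv (li i) (lki i)).symm
      (c.1 i - truncate (min_le_right _ _) κ,
        g (c.2 - k, suffixes (fun j : {x // x ∈ S} => li j) (fun j => lki j) s)) :=
  rfl

theorem dec_enc {S : Fin t → Finset (Fin t)}
    (f : (∀ i, Fin (li i - lki i) → K) →ₗ[K] (Fin lk → K))
    (g : ∀ i, ((Fin lk → K) × (∀ j : {x // x ∈ S i}, Fin (li j.1 - lki j.1) → K))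
      →ₗ[K] (Fin (li i - lki i) → K))
    (hfg : ∀ m i, g i (f m, fun j => m j.1) = m i) m k kp (w : W) i :
    dec i (g i) (enc f (m, k, kp, w), (fun j => m j.1), k, kp i) = m i := by
  have hside : suffixes (fun j : {x // x ∈ S i} => li j) (fun j => lki j) (fun j => m j.1) =
      fun j : {x // x ∈ S i} => suffixes li lki m j.1 := rfl
  rw [dec_apply, enc_apply, add_sub_cancel_right, add_sub_cancel_right, hside, hfg]
  exact (splitEquiv (li i) (lki i)).symm_apply_apply (m i)

theorem enc_comp_inr_surjective (f : (∀ i, Fin (li i - lki i) → K) →ₗ[K] (Fin lk → K)) :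
    Function.Surjective (enc (W := W) f ∘ₗ inr K _ _) := by
  rintro ⟨p, c⟩
  choose kp hkp using fun i => funLeft_surjective_of_injective K K _
    (Fin.castLE_injective (min_le_right (li i) (lki i))) (p i)
  refine ⟨(c, kp, 0), ?_⟩
  simp [enc_apply, truncate, hkp]

end OneTimePad

theorem exists_linConvCode_of_linSecureCode {𝔽 : Type} [Field 𝔽] [Fintype 𝔽] {t : ℕ}
    {S : Fin t → Finset (Fin t)} (c : LinSecureCode 𝔽 t S) :
    ∃ c' : LinConvCode 𝔽 t S, c'.li = (fun i => c.li i - c.lki i) ∧ c'.l = c.lk := by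
  obtain ⟨L, hL⟩ := c.enc.exists_apply_eq_zero_of_range_le
    (c.enc.card_fiber_eq_iff_range_le.1 c.secrecy)
  have hdecL : ∀ m i, c.dec i (0, fun j => m j.1, (L m).1, (L m).2.1 i) = m i := fun m i => by
    have hzero : c.enc (m, (L m).1, (L m).2.1, (L m).2.2) = 0 := hL m
    simpa only [hzero] using c.zeroError m (L m).1 (L m).2.1 (L m).2.2 i
  choose ρ e hρe hρT using fun i =>
    exists_retraction_comp_eq_zero (c.dec i ∘ₗ inr 𝔽 _ _ ∘ₗ inr 𝔽 _ _ ∘ₗ inr 𝔽 _ _)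
  have hkill : ∀ i κ, ρ i (c.dec i (0, 0, 0, κ)) = 0 := fun i κ =>
    LinearMap.congr_fun (hρT i) κ
  let E : (∀ i, Fin (c.li i - c.lki i) → 𝔽) →ₗ[𝔽] ∀ i, Fin (c.li i) → 𝔽 :=
    pi fun i => e i ∘ₗ proj i
  refine ⟨⟨fun i => c.li i - c.lki i, c.lk, fst 𝔽 _ _ ∘ₗ L ∘ₗ E,
    fun i => ρ i ∘ₗ c.dec i ∘ₗ
      prod 0 (prod ((pi fun j => e j.1 ∘ₗ proj j) ∘ₗ snd 𝔽 _ _) (prod (fst 𝔽 _ _) 0)),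
    fun mb i => ?_⟩, rfl, rfl⟩
  change ρ i (c.dec i (0, fun j => E mb j.1, (L (E mb)).1, 0)) = mb i
  calc ρ i (c.dec i (0, fun j => E mb j.1, (L (E mb)).1, 0))
      = ρ i (c.dec i (0, fun j => E mb j.1, (L (E mb)).1, (L (E mb)).2.1 i))
          - ρ i (c.dec i (0, 0, 0, (L (E mb)).2.1 i)) := by
        rw [← map_sub, ← map_sub]; simp
    _ = mb i := by rw [hdecL, hkill, sub_zero]; exact LinearMap.congr_fun (hρe i) (mb i)

theorem exists_linSecureCode_of_linConvCode {𝔽 : Type} [Field 𝔽] [Fintype 𝔽] {t : ℕ}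
    {S : Fin t → Finset (Fin t)} {li lki : Fin t → ℕ} (c : LinConvCode 𝔽 t S)
    (hc : c.li = fun i => li i - lki i) :
    ∃ c' : LinSecureCode 𝔽 t S, c'.li = li ∧ c'.lk = c.l ∧ c'.lki = lki := by
  obtain ⟨_, lk, f, g, hfg⟩ := c
  subst hc
  let C := OneTimePad.Codeword 𝔽 li lki lk
  let φ := LinearEquiv.ofFinrankEq C (Fin (finrank 𝔽 C) → 𝔽) (finrank_fin_fun 𝔽).symm
  refine ⟨⟨li, lk, lki, 0, finrank 𝔽 C, φ.toLinearMap ∘ₗ OneTimePad.enc f,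
    fun i => OneTimePad.dec i (g i) ∘ₗ φ.symm.toLinearMap.prodMap id,
    fun m k kp w i => ?_, ?_⟩, rfl, rfl, rfl⟩
  · change OneTimePad.dec i (g i) (φ.symm (φ (OneTimePad.enc f (m, k, kp, w))), _) = m i
    rw [φ.symm_apply_apply]
    exact OneTimePad.dec_enc f g hfg m k kp w i
  · refine (card_fiber_eq_iff_range_le _).2 (le_top.trans_eq (range_eq_top.2 ?_).symm)
    exact φ.surjective.comp (OneTimePad.enc_comp_inr_surjective f)

theorem linear_secure_iff_conventional_general
    (𝔽 : Type) [Field 𝔽] [Fintype 𝔽]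
    (t : ℕ) (S : Fin t → Finset (Fin t))
    (li : Fin t → ℕ) (lk : ℕ) (lki : Fin t → ℕ) :
    (∃ c : LinSecureCode 𝔽 t S, c.li = li ∧ c.lk = lk ∧ c.lki = lki) ↔
      (∃ c : LinConvCode 𝔽 t S, c.li = (fun i => li i - lki i) ∧ c.l = lk) := by
  constructor
  · rintro ⟨c, rfl, rfl, rfl⟩
    exact exists_linConvCode_of_linSecureCode c
  · rintro ⟨c, hc, rfl⟩
    exact exists_linSecureCode_of_linConvCode c hc

/-- **Theorem 2.** A linear zero-error perfectly secure index code with message lengths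
`li`, common key length `lk` and private key lengths `lki` (and some private randomness
length and code length) exists if and only if a conventional zero-error linear index code
with message lengths `[li i − lki i]_+` and code length `lk` exists.  (Here natural
subtraction `li i - lki i` is exactly the truncation `[·]_+`.) -/
theorem linear_secure_iff_conventional
    (𝔽 : Type) [Field 𝔽] [Fintype 𝔽]
    (t : ℕ) (S : Fin t → Finset (Fin t)) (hS : ∀ i, i ∉ S i)
    (li : Fin t → ℕ) (lk : ℕ) (lki : Fin t → ℕ) :
    (∃ c : LinSecureCode 𝔽 t S, c.li = li ∧ c.lk = lk ∧ c.lki = lki) ↔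
      (∃ c : LinConvCode 𝔽 t S, c.li = (fun i => li i - lki i) ∧ c.l = lk) :=
  linear_secure_iff_conventional_general 𝔽 t S li lk lki
end

section
/- Fix an index coding instance and nonnegative reals r_1,…,r_t, r_{k_1},…,r_{k_t}. There exists α>0 such that α·(r_1,…,r_t, 0, r_{k_1},…,r_{k_t}) ∈ 𝓡_Secure (i.e., perfect secrecy with no common key) if and only if r_{k_i} ≥ r_i for every i ∈ {1,…,t}. -/
/-- A zero-error perfectly secure index code for the side-information structure `S` on
`t` receivers.  The message, key, randomness and code alphabets are finite nonempty
types, the decoders recover the messages exactly, and (when the keys and the private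
randomness are uniform and mutually independent) the distribution of the public code
symbol does not depend on the message tuple: this is expressed by equality of the
counts of key/randomness tuples producing each code symbol. -/
structure SecureCode (t : ℕ) (S : Fin t → Finset (Fin t)) where
  M : Fin t → Type
  K : Type
  Kp : Fin t → Type
  W : Type
  C : Type
  finM : ∀ i, Finite (M i)
  finK : Finite K
  finKp : ∀ i, Finite (Kp i)
  finW : Finite W
  finC : Finite C
  neM : ∀ i, Nonempty (M i)
  neK : Nonempty K
  neKp : ∀ i, Nonempty (Kp i)
  neW : Nonempty W
  cardC : 2 ≤ Nat.card C
  enc : (∀ i, M i) → K → (∀ i, Kp i) → W → C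
  dec : ∀ i : Fin t, C → (∀ j : {x // x ∈ S i}, M j.1) → K → Kp i → M i
  zeroError : ∀ (m : ∀ i, M i) (k : K) (kp : ∀ i, Kp i) (w : W) (i : Fin t),
    dec i (enc m k kp w) (fun j => m j.1) k (kp i) = m i
  secrecy : ∀ (m m' : ∀ i, M i) (c : C),
    Nat.card {x : K × (∀ i, Kp i) × W // enc m x.1 x.2.1 x.2.2 = c}
      = Nat.card {x : K × (∀ i, Kp i) × W // enc m' x.1 x.2.1 x.2.2 = c}

/-- The rate vector `(r_1, …, r_t, r_k, r_{k_1}, …, r_{k_t})` of a secure index code. -/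
noncomputable def SecureCode.rate {t : ℕ} {S : Fin t → Finset (Fin t)}
    (c : SecureCode t S) : (Fin t → ℝ) × ℝ × (Fin t → ℝ) :=
  (fun i => Real.log (Nat.card (c.M i)) / Real.log (Nat.card c.C),
   Real.log (Nat.card c.K) / Real.log (Nat.card c.C),
   fun i => Real.log (Nat.card (c.Kp i)) / Real.log (Nat.card c.C))

/-- The asymptotic secure index coding region `𝓡_Secure`: all limits of rate vectors of
sequences of zero-error perfectly secure index codes. -/
def RSecure (t : ℕ) (S : Fin t → Finset (Fin t)) :
    Set ((Fin t → ℝ) × ℝ × (Fin t → ℝ)) :=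
  { r | ∃ seq : ℕ → SecureCode t S,
      Filter.Tendsto (fun n => (seq n).rate) Filter.atTop (nhds r) }

/-- A conventional zero-error index code (no keys, no secrecy requirement). -/
structure ConvCode (t : ℕ) (S : Fin t → Finset (Fin t)) where
  M : Fin t → Type
  C : Type
  finM : ∀ i, Finite (M i)
  finC : Finite C
  neM : ∀ i, Nonempty (M i)
  cardC : 2 ≤ Nat.card C
  enc : (∀ i, M i) → C
  dec : ∀ i : Fin t, C → (∀ j : {x // x ∈ S i}, M j.1) → M i
  zeroError : ∀ (m : ∀ i, M i) (i : Fin t), dec i (enc m) (fun j => m j.1) = m i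

/-- The rate vector `(r_1, …, r_t)` of a conventional index code. -/
noncomputable def ConvCode.rate {t : ℕ} {S : Fin t → Finset (Fin t)}
    (c : ConvCode t S) : Fin t → ℝ :=
  fun i => Real.log (Nat.card (c.M i)) / Real.log (Nat.card c.C)

/-- The asymptotic conventional index coding region `𝓡`: all limits of rate vectors of
sequences of conventional zero-error index codes. -/
def RConv (t : ℕ) (S : Fin t → Finset (Fin t)) : Set (Fin t → ℝ) :=
  { r | ∃ seq : ℕ → ConvCode t S,
      Filter.Tendsto (fun n => (seq n).rate) Filter.atTop (nhds r) }

/-!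
Secrecy forces every value of `M i` to be encodable to one fixed code symbol, and receiver `i`
(who does not see `M i`) must then recover it from its keys; hence `|M i| ≤ |K| |K i|`, i.e.
`r_i ≤ r_k + r_{k_i}` for every code, a closed condition that passes to the limit and reads
`r_i ≤ r_{k_i}` when `r_k = 0`. Conversely the one-time pad with `⌈n r_i⌉` message bits,
`⌈n r_{k_i}⌉` private key bits and `n + 1` extra random bits in the code symbol has rates
tending to `(r, 0, r_k) / (1 + ∑ r_j)`.
-/

open Filter Topology Function

attribute [local instance] SecureCode.finM SecureCode.finK SecureCode.finKp SecureCode.finW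
  SecureCode.finC SecureCode.neM SecureCode.neK SecureCode.neKp SecureCode.neW

namespace SecureCode

variable {t : ℕ} {S : Fin t → Finset (Fin t)} (c : SecureCode t S)

theorem exists_enc_eq (m m' : ∀ i, c.M i) (k : c.K) (kp : ∀ i, c.Kp i) (w : c.W) :
    ∃ y : c.K × (∀ i, c.Kp i) × c.W, c.enc m' y.1 y.2.1 y.2.2 = c.enc m k kp w := by
  have hpos : 0 < Nat.card {y : c.K × (∀ i, c.Kp i) × c.W //
      c.enc m y.1 y.2.1 y.2.2 = c.enc m k kp w} :=
    Nat.card_pos_iff.mpr ⟨⟨⟨(k, kp, w), rfl⟩⟩, inferInstance⟩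
  rw [c.secrecy m m'] at hpos
  obtain ⟨⟨y, hy⟩⟩ := (Nat.card_pos_iff.mp hpos).1
  exact ⟨y, hy⟩

theorem card_M_le_card_K_mul {i : Fin t} (hi : i ∉ S i) :
    Nat.card (c.M i) ≤ Nat.card c.K * Nat.card (c.Kp i) := by
  obtain ⟨m₀, k₀, kp₀, w₀⟩ : Nonempty ((∀ i, c.M i) × c.K × (∀ i, c.Kp i) × c.W) :=
    inferInstance
  choose F hF using fun x => c.exists_enc_eq m₀ (update m₀ i x) k₀ kp₀ w₀
  have hside (x : c.M i) :
      (fun j : {j // j ∈ S i} => update m₀ i x j.1) = fun j : {j // j ∈ S i} => m₀ j.1 :=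
    funext fun j => update_of_ne (ne_of_mem_of_not_mem j.2 hi) _ _
  have hdec (x : c.M i) :
      c.dec i (c.enc m₀ k₀ kp₀ w₀) (fun j => m₀ j.1) (F x).1 ((F x).2.1 i) = x := by
    simpa [hF, hside] using c.zeroError (update m₀ i x) (F x).1 (F x).2.1 (F x).2.2 i
  rw [← Nat.card_prod]
  refine Nat.card_le_card_of_injective (fun x => ((F x).1, (F x).2.1 i)) fun x y hxy => ?_
  simp only [Prod.mk.injEq] at hxy
  rw [← hdec x, ← hdec y, hxy.1, hxy.2]

theorem rate_fst_le {i : Fin t} (hi : i ∉ S i) : c.rate.1 i ≤ c.rate.2.1 + c.rate.2.2 i := by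
  have hC : 0 < Real.log (Nat.card c.C) := Real.log_pos (by exact_mod_cast c.cardC)
  have hK : (0 : ℝ) < Nat.card c.K := Nat.cast_pos.mpr Nat.card_pos
  have hKp : (0 : ℝ) < Nat.card (c.Kp i) := Nat.cast_pos.mpr Nat.card_pos
  have hM : (0 : ℝ) < Nat.card (c.M i) := Nat.cast_pos.mpr Nat.card_pos
  simp only [rate]
  rw [← add_div, ← Real.log_mul hK.ne' hKp.ne']
  gcongr
  exact_mod_cast c.card_M_le_card_K_mul hi

end SecureCode

theorem rate_fst_le_of_mem_RSecure {t : ℕ} {S : Fin t → Finset (Fin t)} {i : Fin t}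
    (hi : i ∉ S i) {v : (Fin t → ℝ) × ℝ × (Fin t → ℝ)} (hv : v ∈ RSecure t S) :
    v.1 i ≤ v.2.1 + v.2.2 i := by
  obtain ⟨seq, hseq⟩ := hv
  have hclosed : IsClosed {v : (Fin t → ℝ) × ℝ × (Fin t → ℝ) | v.1 i ≤ v.2.1 + v.2.2 i} :=
    isClosed_le (by fun_prop) (by fun_prop)
  exact hclosed.mem_of_tendsto hseq (.of_forall fun n => (seq n).rate_fst_le hi)

abbrev Bits (a : ℕ) : Type := Fin a → ZMod 2

theorem Nat.card_bits (a : ℕ) : Nat.card (Bits a) = 2 ^ a := by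
  simp

theorem Nat.card_pi_bits_prod_bits {t : ℕ} (A : Fin t → ℕ) (E : ℕ) :
    Nat.card ((∀ i, Bits (A i)) × Bits (E + 1)) = 2 ^ (E + 1 + ∑ i, A i) := by
  rw [Nat.card_prod, Nat.card_pi]
  simp only [Nat.card_bits, Finset.prod_pow_eq_pow_sum, ← pow_add, add_comm]

theorem Real.log_two_pow_div_log_two_pow (a b : ℕ) :
    Real.log ((2 ^ a : ℕ) : ℝ) / Real.log ((2 ^ b : ℕ) : ℝ) = a / b := by
  push_cast
  rw [Real.log_pow, Real.log_pow, mul_div_mul_right _ _ (Real.log_pos one_lt_two).ne']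

/-- Receiver `i` gets `m i + p i` for the first component `p i` of its private key; the
`D i` further key bits are unused, and the `E + 1` random bits appended to the code symbol
tune its length. -/
def padCode (t : ℕ) (S : Fin t → Finset (Fin t)) (A D : Fin t → ℕ) (E : ℕ) :
    SecureCode t S where
  M i := Bits (A i)
  K := Unit
  Kp i := Bits (A i) × Bits (D i)
  W := Bits (E + 1)
  C := (∀ i, Bits (A i)) × Bits (E + 1)
  finM _ := inferInstance
  finK := inferInstance
  finKp _ := inferInstance
  finW := inferInstance
  finC := inferInstance
  neM _ := inferInstance
  neK := inferInstance
  neKp _ := inferInstance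
  neW := inferInstance
  cardC := by
    rw [Nat.card_pi_bits_prod_bits]
    exact Nat.le_self_pow (by omega) 2
  enc m _ kp w := (fun i => m i + (kp i).1, w)
  dec i x _ _ kp := x.1 i - kp.1
  zeroError _ _ _ _ _ := add_sub_cancel_right _ _
  secrecy m m' x := by
    let shift : Unit × (∀ i, Bits (A i) × Bits (D i)) × Bits (E + 1) ≃ _ :=
      (Equiv.refl _).prodCongr <| (Equiv.piCongrRight fun i =>
        (Equiv.addRight (m i - m' i)).prodCongr (Equiv.refl _)).prodCongr (Equiv.refl _)
    refine Nat.card_congr (shift.subtypeEquiv fun y => ?_)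
    suffices (fun i => m' i + ((y.2.1 i).1 + (m i - m' i)), y.2.2) =
        ((fun i => m i + (y.2.1 i).1, y.2.2) : (∀ i, Bits (A i)) × Bits (E + 1)) by
      exact this ▸ Iff.rfl
    congr 1
    funext i
    abel

theorem padCode_rate {t : ℕ} (S : Fin t → Finset (Fin t)) (A D : Fin t → ℕ) (E : ℕ) :
    (padCode t S A D E).rate =
      (fun i => (A i : ℝ) / ((E + 1 + ∑ j, A j : ℕ) : ℝ), 0,
        fun i => ((A i + D i : ℕ) : ℝ) / ((E + 1 + ∑ j, A j : ℕ) : ℝ)) := by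
  have hC : Nat.card (padCode t S A D E).C = 2 ^ (E + 1 + ∑ j, A j) :=
    Nat.card_pi_bits_prod_bits A E
  have hM (i : Fin t) : Nat.card ((padCode t S A D E).M i) = 2 ^ A i := Nat.card_bits _
  have hKp (i : Fin t) : Nat.card ((padCode t S A D E).Kp i) = 2 ^ (A i + D i) := by
    rw [pow_add, ← Nat.card_bits, ← Nat.card_bits, ← Nat.card_prod]
    rfl
  have hK : Nat.card (padCode t S A D E).K = 1 := Nat.card_unique (α := Unit)
  simp only [SecureCode.rate, hC, hM, hKp, hK, Nat.cast_one, Real.log_one, zero_div,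
    Real.log_two_pow_div_log_two_pow]

theorem tendsto_natCeil_mul_natCast_div {x : ℝ} (hx : 0 ≤ x) :
    Tendsto (fun n : ℕ => (⌈x * n⌉₊ : ℝ) / n) atTop (𝓝 x) :=
  (tendsto_nat_ceil_mul_div_atTop hx).comp tendsto_natCast_atTop_atTop

theorem tendsto_natCast_add_one_add_sum_natCeil_div {ι : Type*} [Fintype ι] {r : ι → ℝ}
    (hr : ∀ i, 0 ≤ r i) :
    Tendsto (fun n : ℕ => ((n + 1 + ∑ j, ⌈r j * n⌉₊ : ℕ) : ℝ) / n) atTop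
      (𝓝 (1 + ∑ j, r j)) := by
  have h := (tendsto_one_div_atTop_nhds_zero_nat.const_add 1).add
    (tendsto_finsetSum Finset.univ fun j _ => tendsto_natCeil_mul_natCast_div (hr j))
  rw [add_zero] at h
  refine h.congr' ((eventually_ne_atTop 0).mono fun n hn => ?_)
  have hn' : (n : ℝ) ≠ 0 := Nat.cast_ne_zero.mpr hn
  push_cast
  rw [add_div, add_div, div_self hn', Finset.sum_div]

theorem Filter.Tendsto.div_of_div_natCast {a b : ℕ → ℝ} {x y : ℝ}
    (ha : Tendsto (fun n => a n / n) atTop (𝓝 x)) (hb : Tendsto (fun n => b n / n) atTop (𝓝 y))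
    (hy : y ≠ 0) : Tendsto (fun n => a n / b n) atTop (𝓝 (x / y)) :=
  (ha.div hb hy).congr' <| (eventually_ne_atTop 0).mono fun _ hn =>
    div_div_div_cancel_right₀ (Nat.cast_ne_zero.mpr hn) _ _

theorem private_keys_only_general
    (t : ℕ) (S : Fin t → Finset (Fin t)) (hS : ∀ i, i ∉ S i)
    (r : Fin t → ℝ) (rkp : Fin t → ℝ)
    (hr : ∀ i, 0 ≤ r i) :
    (∃ α : ℝ, 0 < α ∧
        ((fun i => α * r i), (0 : ℝ), (fun i => α * rkp i)) ∈ RSecure t S) ↔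
      ∀ i, r i ≤ rkp i := by
  constructor
  · rintro ⟨α, hα, hmem⟩ i
    have hle : α * r i ≤ 0 + α * rkp i := rate_fst_le_of_mem_RSecure (hS i) hmem
    exact le_of_mul_le_mul_left (by rwa [zero_add] at hle) hα
  · intro h
    have hsum : 0 ≤ ∑ j, r j := Finset.sum_nonneg fun j _ => hr j
    let A (n : ℕ) (i : Fin t) : ℕ := ⌈r i * n⌉₊
    let B (n : ℕ) (i : Fin t) : ℕ := ⌈rkp i * n⌉₊
    have hAB (n : ℕ) (i : Fin t) : A n i + (B n i - A n i) = B n i :=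
      Nat.add_sub_of_le (Nat.ceil_mono (by gcongr; exact h i))
    refine ⟨(1 + ∑ j, r j)⁻¹, by positivity,
      fun n => padCode t S (A n) (fun i => B n i - A n i) n, ?_⟩
    simp only [padCode_rate, hAB, inv_mul_eq_div]
    have hN := tendsto_natCast_add_one_add_sum_natCeil_div hr
    refine (tendsto_pi_nhds.2 fun i => ?_).prodMk_nhds
      (tendsto_const_nhds.prodMk_nhds (tendsto_pi_nhds.2 fun i => ?_))
    · exact (tendsto_natCeil_mul_natCast_div (hr i)).div_of_div_natCast hN (by positivity)
    · exact (tendsto_natCeil_mul_natCast_div ((hr i).trans (h i))).div_of_div_natCast hN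
        (by positivity)

/-- **Corollary (private keys only).** With no common key (`r_k = 0`), some positive
multiple of the rate vector `(r, 0, r_{k_·})` is perfectly securely achievable if and
only if `r_{k_i} ≥ r_i` for every `i`. -/
theorem private_keys_only
    (t : ℕ) (S : Fin t → Finset (Fin t)) (hS : ∀ i, i ∉ S i)
    (r : Fin t → ℝ) (rkp : Fin t → ℝ)
    (hr : ∀ i, 0 ≤ r i) (hrkp : ∀ i, 0 ≤ rkp i) :
    (∃ α : ℝ, 0 < α ∧
        ((fun i => α * r i), (0 : ℝ), (fun i => α * rkp i)) ∈ RSecure t S) ↔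
      ∀ i, r i ≤ rkp i :=
  private_keys_only_general t S hS r rkp hr
end

section
/- Let 𝔽 be a field and n, m, l, l₁ nonnegative integers. Let A be an l×n matrix, B an l×m matrix, C an l₁×n matrix, and D an l₁×m matrix over 𝔽, such that X is recoverable from the pair (AX+BY, CX+DY): for all column vectors X, X' ∈ 𝔽^n and Y, Y' ∈ 𝔽^m, if AX+BY = AX'+BY' and CX+DY = CX'+DY', then X = X'. Then there exists a subset S ⊆ {1,…,n} with |S| ≤ l₁ such that X is recoverable from AX+BY together with the entries of X indexed by S: for all X, X' ∈ 𝔽^n and Y, Y' ∈ 𝔽^m, if AX+BY = AX'+BY' and X(i) = X'(i) for every i ∈ S, then X = X'. -/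
/-!
On `V = 𝔽ⁿ × 𝔽ᵐ` let `P (X, Y) = A X + B Y`, `Q (X, Y) = C X + D Y`, and let `U ⊆ 𝔽ⁿ` be the image of
`ker P` under `(X, Y) ↦ X`. Since `ker P ⊓ ker Q` lies in the kernel of that
projection, rank–nullity on `ker P` gives `dim U ≤ dim Q (ker P) ≤ l₁`. The coordinate functionals
separate the points of `U`, so a basis of `U*` can be extracted from them: at most `dim U`
coordinates already determine every vector of `U`, and `X - X'` is such a vector.
-/

open Module LinearMap

section

variable {K V W W' : Type*} [Field K] [AddCommGroup V] [Module K V]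
  [AddCommGroup W] [Module K W] [AddCommGroup W'] [Module K W']

theorem LinearMap.finrank_range_le_of_ker_le [FiniteDimensional K V] {φ : V →ₗ[K] W}
    {ψ : V →ₗ[K] W'} (h : ker ψ ≤ ker φ) : finrank K (range φ) ≤ finrank K (range ψ) := by
  have := φ.finrank_range_add_finrank_ker
  have := ψ.finrank_range_add_finrank_ker
  have := Submodule.finrank_mono h
  omega

theorem Submodule.finrank_map_le_of_inf_ker_le (p : Submodule K V) [FiniteDimensional K p]
    {φ : V →ₗ[K] W} {ψ : V →ₗ[K] W'} (h : p ⊓ ker ψ ≤ ker φ) :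
    finrank K (p.map φ) ≤ finrank K (p.map ψ) := by
  rw [← range_domRestrict, ← range_domRestrict]
  refine finrank_range_le_of_ker_le fun v hv => ?_
  simpa using h ⟨v.2, by simpa using hv⟩

theorem exists_finset_card_le_finrank_of_forall_eq_zero [FiniteDimensional K V] {ι : Type*}
    (f : ι → Dual K V) (hf : ∀ v, (∀ i, f i v = 0) → v = 0) :
    ∃ S : Finset ι, S.card ≤ finrank K V ∧ ∀ v, (∀ i ∈ S, f i v = 0) → v = 0 := by
  obtain ⟨κ, a, ha, hspan, hli⟩ := exists_linearIndependent' K f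
  have : Fintype κ := @Fintype.ofFinite _ hli.finite
  refine ⟨Finset.univ.map ⟨a, ha⟩, ?_, fun v hv => hf v fun i => ?_⟩
  · calc (Finset.univ.map ⟨a, ha⟩).card = Fintype.card κ := Finset.card_map _
      _ ≤ finrank K (Dual K V) := hli.fintype_card_le_finrank
      _ = finrank K V := Subspace.dual_finrank_eq
  · have hle : Submodule.span K (Set.range (f ∘ a)) ≤ ker (Dual.eval K V v) :=
      Submodule.span_le.mpr <| Set.range_subset_iff.mpr fun k => hv _ (by simp)
    exact hle (hspan ▸ Submodule.subset_span ⟨i, rfl⟩)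

end

theorem Submodule.exists_finset_card_le_finrank_of_coord_eq_zero {K ι : Type*} [Field K] [Finite ι]
    (U : Submodule K (ι → K)) :
    ∃ S : Finset ι, S.card ≤ finrank K U ∧ ∀ x ∈ U, (∀ i ∈ S, x i = 0) → x = 0 := by
  obtain ⟨S, hS, hSU⟩ := exists_finset_card_le_finrank_of_forall_eq_zero
    (fun i => (proj i).comp U.subtype) fun v hv => Subtype.ext (funext hv)
  exact ⟨S, hS, fun x hx hxS => congrArg Subtype.val (hSU ⟨x, hx⟩ hxS)⟩

/-- **Lemma 2.** If the vector `X` can be recovered from the pair of linear observations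
`A X + B Y` and `C X + D Y`, then there is a set `S` of at most `l₁` coordinates of `X`
such that `X` can be recovered from `A X + B Y` together with the entries of `X` on `S`. -/
theorem recover_from_public_and_few_entries
    (𝔽 : Type*) [Field 𝔽] (n m l l₁ : ℕ)
    (A : Matrix (Fin l) (Fin n) 𝔽) (B : Matrix (Fin l) (Fin m) 𝔽)
    (C : Matrix (Fin l₁) (Fin n) 𝔽) (D : Matrix (Fin l₁) (Fin m) 𝔽)
    (hrec : ∀ (X X' : Fin n → 𝔽) (Y Y' : Fin m → 𝔽),
      A.mulVec X + B.mulVec Y = A.mulVec X' + B.mulVec Y' →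
      C.mulVec X + D.mulVec Y = C.mulVec X' + D.mulVec Y' → X = X') :
    ∃ S : Finset (Fin n), S.card ≤ l₁ ∧
      ∀ (X X' : Fin n → 𝔽) (Y Y' : Fin m → 𝔽),
        A.mulVec X + B.mulVec Y = A.mulVec X' + B.mulVec Y' →
        (∀ i ∈ S, X i = X' i) → X = X' := by
  let P := A.mulVecLin.coprod B.mulVecLin
  let Q := C.mulVecLin.coprod D.mulVecLin
  let U := (ker P).map (fst 𝔽 (Fin n → 𝔽) (Fin m → 𝔽))
  have hU : finrank 𝔽 U ≤ l₁ := by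
    refine ((ker P).finrank_map_le_of_inf_ker_le (ψ := Q) fun v hv => ?_).trans
      ((Submodule.finrank_le _).trans_eq (finrank_fin_fun 𝔽))
    simpa using hrec v.1 0 v.2 0 (by simpa [P] using hv.1) (by simpa [Q] using hv.2)
  obtain ⟨S, hS, hSU⟩ := U.exists_finset_card_le_finrank_of_coord_eq_zero
  refine ⟨S, hS.trans hU, fun X X' Y Y' hAB hXS => sub_eq_zero.mp (hSU _ ?_ ?_)⟩
  · refine ⟨(X - X', Y - Y'), ?_, rfl⟩
    simp [P, Matrix.mulVec_sub, sub_add_sub_comm, hAB]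
  · simpa [sub_eq_zero] using hXS
end

section
/- Let M_1,…,M_t, K be mutually independent random variables taking values in finite sets, let M = (M_1,…,M_t), and let C be a random variable with I(M;C) = 0. Suppose that for each i ∈ {1,…,t} there is a subset 𝐒_i ⊆ {1,…,t}∖{i} with H(M_i | C, (M_j)_{j∈𝐒_i}, K) = 0. Then H(K) ≥ H(M_i) for every i ∈ {1,…,t}; in particular H(K) ≥ max_i H(M_i). -/
open scoped BigOperators

/-- The probability that the random variable `X` takes the value `a`, on a finite
probability space with mass function `μ`. -/
noncomputable def pr {Ω A : Type*} [Fintype Ω] (μ : Ω → ℝ) (X : Ω → A) (a : A) : ℝ :=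
  ∑ ω, Set.indicator {ω' | X ω' = a} μ ω

/-- Shannon entropy of a finitely valued random variable `X`. -/
noncomputable def entH {Ω A : Type*} [Fintype Ω] [Fintype A] (μ : Ω → ℝ) (X : Ω → A) : ℝ :=
  -∑ a, pr μ X a * Real.log (pr μ X a)

/-- Conditional Shannon entropy `H(X|Y)`. -/
noncomputable def condH {Ω A B : Type*} [Fintype Ω] [Fintype A] [Fintype B]
    (μ : Ω → ℝ) (X : Ω → A) (Y : Ω → B) : ℝ :=
  entH μ (fun ω => (X ω, Y ω)) - entH μ Y

/-- Mutual information `I(X;Y)`. -/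
noncomputable def mi {Ω A B : Type*} [Fintype Ω] [Fintype A] [Fintype B]
    (μ : Ω → ℝ) (X : Ω → A) (Y : Ω → B) : ℝ :=
  entH μ X + entH μ Y - entH μ (fun ω => (X ω, Y ω))

/-- Conditional mutual information `I(X;Y|Z)`. -/
noncomputable def cmi {Ω A B D : Type*} [Fintype Ω] [Fintype A] [Fintype B] [Fintype D]
    (μ : Ω → ℝ) (X : Ω → A) (Y : Ω → B) (Z : Ω → D) : ℝ :=
  condH μ X Z + condH μ Y Z - condH μ (fun ω => (X ω, Y ω)) Z

/-- Probability of the event `E` on a finite probability space with mass function `μ`. -/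
noncomputable def prEvent {Ω : Type*} [Fintype Ω] (μ : Ω → ℝ) (E : Ω → Prop) : ℝ :=
  ∑ ω, Set.indicator {ω' | E ω'} μ ω

/-! Write `Y = (M_j)_{j ∈ S_i}`. The message `M_i` is independent of `Y`, and by data processing
`I((M_i, Y); C) ≤ I(M; C) = 0`. Hence
`H(M_i) = H(M_i | Y) = H(M_i | Y, C) ≤ H(M_i, K | Y, C) = H(K | Y, C) ≤ H(K)`,
the last equality because `M_i` is determined by `(C, Y, K)`. The Shannon inequalities used all
reduce to submodularity of entropy, an instance of Gibbs' inequality. -/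

open Finset Real

section Entropy
open scoped Classical
variable {Ω A B D E : Type*} [Fintype Ω] (μ : Ω → ℝ)

theorem pr_eq_sum_filter (X : Ω → A) (a : A) : pr μ X a = ∑ ω with X ω = a, μ ω := by
  rw [pr, sum_indicator_eq_sum_filter]
  rfl

theorem pr_nonneg (hμ0 : ∀ ω, 0 ≤ μ ω) (X : Ω → A) (a : A) : 0 ≤ pr μ X a := by
  rw [pr_eq_sum_filter]
  exact sum_nonneg fun ω _ => hμ0 ω

theorem pr_comp [Fintype A] (X : Ω → A) (f : A → B) (b : B) :
    pr μ (fun ω => f (X ω)) b = ∑ a with f a = b, pr μ X a := by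
  simp only [pr_eq_sum_filter]
  rw [← sum_fiberwise_of_maps_to (s := {ω | f (X ω) = b}) (t := {a | f a = b}) (g := X)
    (by simp)]
  refine sum_congr rfl fun a ha => ?_
  rw [filter_filter]
  refine sum_congr (filter_congr fun ω _ => ?_) fun _ _ => rfl
  simp only [mem_filter, mem_univ, true_and] at ha
  constructor
  · exact And.right
  · intro h; exact ⟨h ▸ ha, h⟩

theorem pr_le_pr_comp [Fintype A] (hμ0 : ∀ ω, 0 ≤ μ ω) (X : Ω → A) (f : A → B) (a : A) :
    pr μ X a ≤ pr μ (fun ω => f (X ω)) (f a) := by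
  rw [pr_comp μ X f]
  exact single_le_sum (fun a _ => pr_nonneg μ hμ0 X a) (mem_filter.2 ⟨mem_univ a, rfl⟩)

variable [Fintype A] [Fintype B] [Fintype D] [Fintype E]

theorem sum_pr (X : Ω → A) : ∑ a, pr μ X a = ∑ ω, μ ω := by
  simp only [pr_eq_sum_filter]
  exact sum_fiberwise univ X μ

theorem sum_pr_mul_comp (X : Ω → A) (f : A → B) (φ : B → ℝ) :
    ∑ a, pr μ X a * φ (f a) = ∑ b, pr μ (fun ω => f (X ω)) b * φ b := by
  simp only [pr_comp, sum_mul]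
  rw [← sum_fiberwise univ f]
  exact sum_congr rfl fun b _ => sum_congr rfl fun a ha => by rw [(mem_filter.1 ha).2]

theorem sum_pr_pair_right (X : Ω → A) (Y : Ω → B) (a : A) :
    ∑ b, pr μ (fun ω => (X ω, Y ω)) (a, b) = pr μ X a := by
  rw [show pr μ X a = pr μ (fun ω => (X ω, Y ω).1) a from rfl, pr_comp]
  simp only [sum_filter, Fintype.sum_prod_type]
  rw [sum_comm]
  simp

theorem sum_pr_pair_left (X : Ω → A) (Y : Ω → B) (b : B) :
    ∑ a, pr μ (fun ω => (X ω, Y ω)) (a, b) = pr μ Y b := by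
  rw [show pr μ Y b = pr μ (fun ω => (X ω, Y ω).2) b from rfl, pr_comp]
  simp [sum_filter, Fintype.sum_prod_type]

theorem pr_eq_of_pr_pair_eq_mul (hμ1 : ∑ ω, μ ω = 1) (X : Ω → A) (K : Ω → B) (p : A → ℝ)
    (h : ∀ a k, pr μ (fun ω => (X ω, K ω)) (a, k) = p a * pr μ K k) (a : A) :
    pr μ X a = p a := by
  rw [← sum_pr_pair_right μ X K, sum_congr rfl fun k _ => h a k, ← mul_sum, sum_pr, hμ1,
    mul_one]

theorem entH_eq_sum_negMulLog (X : Ω → A) : entH μ X = ∑ a, negMulLog (pr μ X a) := by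
  simp [entH, negMulLog]

theorem negMulLog_sum_le {ι : Type*} (s : Finset ι) (f : ι → ℝ) (hf : ∀ i ∈ s, 0 ≤ f i) :
    negMulLog (∑ i ∈ s, f i) ≤ ∑ i ∈ s, negMulLog (f i) := by
  rw [negMulLog, neg_mul, sum_mul, ← sum_neg_distrib]
  refine sum_le_sum fun i hi => ?_
  rcases (hf i hi).eq_or_lt with h0 | h0
  · simp [← h0]
  · rw [negMulLog, neg_mul, neg_le_neg_iff]
    exact mul_le_mul_of_nonneg_left (log_le_log h0 (single_le_sum hf hi)) h0.le

theorem entH_comp_le (hμ0 : ∀ ω, 0 ≤ μ ω) (X : Ω → A) (f : A → B) :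
    entH μ (fun ω => f (X ω)) ≤ entH μ X := by
  simp only [entH_eq_sum_negMulLog, pr_comp]
  calc ∑ b, negMulLog (∑ a with f a = b, pr μ X a)
      ≤ ∑ b, ∑ a with f a = b, negMulLog (pr μ X a) :=
        sum_le_sum fun b _ => negMulLog_sum_le _ _ fun a _ => pr_nonneg μ hμ0 X a
    _ = ∑ a, negMulLog (pr μ X a) := sum_fiberwise univ f _

theorem entH_congr (hμ0 : ∀ ω, 0 ≤ μ ω) (X : Ω → A) (Y : Ω → B) (f : A → B) (g : B → A)
    (hf : ∀ ω, Y ω = f (X ω)) (hg : ∀ ω, X ω = g (Y ω)) : entH μ X = entH μ Y := by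
  have hY : Y = fun ω => f (X ω) := funext hf
  have hX : X = fun ω => g (Y ω) := funext hg
  refine le_antisymm ?_ ?_
  · conv_lhs => rw [hX]
    exact entH_comp_le μ hμ0 Y g
  · conv_lhs => rw [hY]
    exact entH_comp_le μ hμ0 X f

theorem entH_pair_comm (hμ0 : ∀ ω, 0 ≤ μ ω) (X : Ω → A) (Y : Ω → B) :
    entH μ (fun ω => (X ω, Y ω)) = entH μ (fun ω => (Y ω, X ω)) :=
  entH_congr μ hμ0 _ _ Prod.swap Prod.swap (fun _ => rfl) fun _ => rfl

theorem entH_const_eq_zero (hμ1 : ∑ ω, μ ω = 1) : entH μ (fun _ => ()) = 0 := by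
  have h : pr μ (fun _ => ()) () = 1 := by
    rw [← hμ1, ← sum_pr μ (fun _ => ()), Fintype.sum_unique]
  rw [entH_eq_sum_negMulLog, Fintype.sum_unique]
  exact h ▸ negMulLog_one

theorem entH_pair_of_indep (hμ1 : ∑ ω, μ ω = 1) (X : Ω → A) (Y : Ω → B)
    (h : ∀ a b, pr μ (fun ω => (X ω, Y ω)) (a, b) = pr μ X a * pr μ Y b) :
    entH μ (fun ω => (X ω, Y ω)) = entH μ X + entH μ Y := by
  simp only [entH_eq_sum_negMulLog, Fintype.sum_prod_type, h, negMulLog_mul, sum_add_distrib,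
    ← sum_mul, ← mul_sum, sum_pr, hμ1, one_mul]

theorem sum_mul_log_le_sum_mul_log {ι : Type*} [Fintype ι] (p q : ι → ℝ) (hp : ∀ i, 0 ≤ p i)
    (hq : ∀ i, 0 ≤ q i) (hpq : ∀ i, 0 < p i → 0 < q i) (hsum : ∑ i, q i ≤ ∑ i, p i) :
    ∑ i, p i * log (q i) ≤ ∑ i, p i * log (p i) := by
  have key : ∀ i, p i * log (q i) - p i * log (p i) ≤ q i - p i := by
    intro i
    rcases (hp i).eq_or_lt with h0 | h0
    · simp [← h0, hq i]
    · have hqi := hpq i h0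
      have := log_le_sub_one_of_pos (div_pos hqi h0)
      rw [log_div hqi.ne' h0.ne'] at this
      calc p i * log (q i) - p i * log (p i) = p i * (log (q i) - log (p i)) := by ring
        _ ≤ p i * (q i / p i - 1) := mul_le_mul_of_nonneg_left this h0.le
        _ = q i - p i := by field_simp
  have := sum_le_sum fun i (_ : i ∈ univ) => key i
  rw [sum_sub_distrib, sum_sub_distrib] at this
  linarith

theorem entH_submodular (hμ0 : ∀ ω, 0 ≤ μ ω) (X : Ω → A) (Y : Ω → B) (Z : Ω → D) :
    entH μ (fun ω => (X ω, Y ω, Z ω)) + entH μ Z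
      ≤ entH μ (fun ω => (X ω, Z ω)) + entH μ (fun ω => (Y ω, Z ω)) := by
  set r := pr μ (fun ω => (X ω, Y ω, Z ω))
  set pXZ := pr μ (fun ω => (X ω, Z ω))
  set pYZ := pr μ (fun ω => (Y ω, Z ω))
  set pZ := pr μ Z
  -- Gibbs' inequality against `q(x, y, z) = p(x, z) p(y, z) / p(z)`, of the same total mass.
  set q : A × B × D → ℝ := fun t => pXZ (t.1, t.2.2) * pYZ (t.2.1, t.2.2) / pZ t.2.2
  have hXZ : ∀ t, r t ≤ pXZ (t.1, t.2.2) := fun t =>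
    pr_le_pr_comp μ hμ0 _ (fun t : A × B × D => (t.1, t.2.2)) t
  have hYZ : ∀ t, r t ≤ pYZ (t.2.1, t.2.2) := fun t =>
    pr_le_pr_comp μ hμ0 _ (fun t : A × B × D => (t.2.1, t.2.2)) t
  have hZ : ∀ t, r t ≤ pZ t.2.2 := fun t =>
    pr_le_pr_comp μ hμ0 _ (fun t : A × B × D => t.2.2) t
  have hq_sum : ∑ t, q t = ∑ t, r t := by
    calc ∑ t, q t = ∑ d, (∑ b, pYZ (b, d)) * (∑ a, pXZ (a, d)) / pZ d := by
          simp only [q, Fintype.sum_prod_type_right, sum_div, sum_mul_sum]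
          exact sum_congr rfl fun d _ => sum_congr rfl fun b _ =>
            sum_congr rfl fun a _ => by ring
      _ = ∑ d, pZ d := by
          simp only [pXZ, pYZ, pZ, sum_pr_pair_left, mul_self_div_self]
      _ = ∑ t, r t := by rw [sum_pr, sum_pr]
  have hlog : ∑ t, r t * log (q t) = ∑ t, r t * log (pXZ (t.1, t.2.2))
      + ∑ t, r t * log (pYZ (t.2.1, t.2.2)) - ∑ t, r t * log (pZ t.2.2) := by
    rw [← sum_add_distrib, ← sum_sub_distrib]
    refine sum_congr rfl fun t _ => ?_
    rcases (pr_nonneg μ hμ0 _ t : 0 ≤ r t).eq_or_lt with h0 | h0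
    · rw [show r t = 0 from h0.symm]
      ring
    · have h1 := h0.trans_le (hXZ t)
      have h2 := h0.trans_le (hYZ t)
      have h3 := h0.trans_le (hZ t)
      rw [log_div (by positivity) h3.ne', log_mul h1.ne' h2.ne']
      ring
  have hgibbs := sum_mul_log_le_sum_mul_log r q (pr_nonneg μ hμ0 _)
    (fun t => div_nonneg (mul_nonneg (pr_nonneg μ hμ0 _ _) (pr_nonneg μ hμ0 _ _))
      (pr_nonneg μ hμ0 _ _))
    (fun t ht => div_pos (mul_pos (ht.trans_le (hXZ t)) (ht.trans_le (hYZ t)))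
      (ht.trans_le (hZ t)))
    hq_sum.le
  rw [hlog, sum_pr_mul_comp μ _ (fun t : A × B × D => (t.1, t.2.2)) (fun x => log (pXZ x)),
    sum_pr_mul_comp μ _ (fun t : A × B × D => (t.2.1, t.2.2)) (fun x => log (pYZ x)),
    sum_pr_mul_comp μ _ (fun t : A × B × D => t.2.2) (fun x => log (pZ x))] at hgibbs
  simp only [entH]
  linarith

theorem mi_comp_le (hμ0 : ∀ ω, 0 ≤ μ ω) (X : Ω → A) (Y : Ω → B) (f : A → D) :
    mi μ (fun ω => f (X ω)) Y ≤ mi μ X Y := by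
  have h := entH_submodular μ hμ0 X Y (fun ω => f (X ω))
  have hXYZ : entH μ (fun ω => (X ω, Y ω, f (X ω))) = entH μ (fun ω => (X ω, Y ω)) :=
    entH_congr μ hμ0 _ _ (fun t => (t.1, t.2.1)) (fun p => (p.1, p.2, f p.1))
      (fun _ => rfl) fun _ => rfl
  have hXZ : entH μ (fun ω => (X ω, f (X ω))) = entH μ X :=
    entH_congr μ hμ0 _ _ Prod.fst (fun a => (a, f a)) (fun _ => rfl) fun _ => rfl
  rw [hXYZ, hXZ, entH_pair_comm μ hμ0 Y] at h
  simp only [mi]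
  linarith

theorem mi_nonneg (hμ0 : ∀ ω, 0 ≤ μ ω) (hμ1 : ∑ ω, μ ω = 1) (X : Ω → A) (Y : Ω → B) :
    0 ≤ mi μ X Y := by
  have hY : entH μ (fun ω => ((), Y ω)) = entH μ Y :=
    entH_congr μ hμ0 _ _ Prod.snd (fun b => ((), b)) (fun _ => rfl) fun _ => rfl
  calc 0 = mi μ (fun _ => ()) Y := by simp only [mi, hY, entH_const_eq_zero μ hμ1]; ring
    _ ≤ mi μ X Y := mi_comp_le μ hμ0 X Y fun _ => ()

theorem mi_comp_eq_zero (hμ0 : ∀ ω, 0 ≤ μ ω) (hμ1 : ∑ ω, μ ω = 1) (X : Ω → A) (Y : Ω → B)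
    (f : A → D) (h : mi μ X Y = 0) : mi μ (fun ω => f (X ω)) Y = 0 :=
  le_antisymm (h ▸ mi_comp_le μ hμ0 X Y f) (mi_nonneg μ hμ0 hμ1 _ Y)

theorem mi_eq_zero_of_indep (hμ1 : ∑ ω, μ ω = 1) (X : Ω → A) (Y : Ω → B)
    (h : ∀ a b, pr μ (fun ω => (X ω, Y ω)) (a, b) = pr μ X a * pr μ Y b) : mi μ X Y = 0 := by
  rw [mi, entH_pair_of_indep μ hμ1 X Y h]
  ring

theorem entH_le_entH_of_perfect_secrecy (hμ0 : ∀ ω, 0 ≤ μ ω) (hμ1 : ∑ ω, μ ω = 1)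
    (X : Ω → A) (Y : Ω → B) (C : Ω → D) (K : Ω → E) (hXY : mi μ X Y = 0)
    (hsec : mi μ (fun ω => (X ω, Y ω)) C = 0)
    (hdec : condH μ X (fun ω => (C ω, Y ω, K ω)) = 0) : entH μ X ≤ entH μ K := by
  have hYC := mi_nonneg μ hμ0 hμ1 Y C
  have hKCY := mi_nonneg μ hμ0 hμ1 K (fun ω => (C ω, Y ω))
  have hmono : entH μ (fun ω => ((X ω, Y ω), C ω)) ≤ entH μ (fun ω => (X ω, C ω, Y ω, K ω)) :=
    entH_comp_le μ hμ0 (fun ω => (X ω, C ω, Y ω, K ω)) fun p => ((p.1, p.2.2.1), p.2.1)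
  have hKCY_eq : entH μ (fun ω => (K ω, C ω, Y ω)) = entH μ (fun ω => (C ω, Y ω, K ω)) :=
    entH_congr μ hμ0 _ _ (fun p => (p.2.1, p.2.2, p.1)) (fun p => (p.2.2, p.1, p.2.1))
      (fun _ => rfl) fun _ => rfl
  rw [mi, entH_pair_comm μ hμ0 C] at hKCY
  simp only [mi, condH] at hXY hsec hYC hdec
  linarith

section Coordinates
variable {β γ ι : Type*} [Fintype ι] {𝓜 : ι → Type*} [∀ j, Fintype (𝓜 j)] (M : ∀ j, Ω → 𝓜 j)

theorem pr_comp_pi_eq_prod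
    (hlaw : ∀ m, pr μ (fun ω j => M j ω) m = ∏ j, pr μ (M j) (m j))
    (F : (∀ j, 𝓜 j) → β) (b : β) (P : ∀ j, 𝓜 j → Prop) (hF : ∀ m, F m = b ↔ ∀ j, P j (m j)) :
    pr μ (fun ω => F (fun j => M j ω)) b = ∏ j, ∑ x with P j x, pr μ (M j) x := by
  rw [pr_comp, prod_univ_sum]
  refine sum_congr ?_ fun m _ => hlaw m
  ext m
  simp [hF]

theorem pr_pair_comp_pi_eq_mul (hμ1 : ∑ ω, μ ω = 1)
    (hlaw : ∀ m, pr μ (fun ω j => M j ω) m = ∏ j, pr μ (M j) (m j))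
    (F : (∀ j, 𝓜 j) → β) (G : (∀ j, 𝓜 j) → γ) (b : β) (d : γ) (P Q : ∀ j, 𝓜 j → Prop)
    (hF : ∀ m, F m = b ↔ ∀ j, P j (m j)) (hG : ∀ m, G m = d ↔ ∀ j, Q j (m j))
    (hPQ : ∀ j, (∀ x, P j x) ∨ (∀ x, Q j x)) :
    pr μ (fun ω => (F (fun j => M j ω), G (fun j => M j ω))) (b, d)
      = pr μ (fun ω => F (fun j => M j ω)) b * pr μ (fun ω => G (fun j => M j ω)) d := by
  rw [pr_comp_pi_eq_prod μ M hlaw (fun m => (F m, G m)) (b, d) (fun j x => P j x ∧ Q j x)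
      (fun m => by simp [hF, hG, forall_and]),
    pr_comp_pi_eq_prod μ M hlaw F b P hF, pr_comp_pi_eq_prod μ M hlaw G d Q hG,
    ← prod_mul_distrib]
  refine prod_congr rfl fun j _ => ?_
  rcases hPQ j with hP | hQ
  · simp [hP, sum_pr, hμ1]
  · simp [hQ, sum_pr, hμ1]

theorem pr_coord_restrict_eq_mul (hμ1 : ∑ ω, μ ω = 1)
    (hlaw : ∀ m, pr μ (fun ω j => M j ω) m = ∏ j, pr μ (M j) (m j))
    {i : ι} {s : Finset ι} (hi : i ∉ s) (a : 𝓜 i) (g : ∀ j : s, 𝓜 j) :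
    pr μ (fun ω => (M i ω, fun j : s => M j ω)) (a, g)
      = pr μ (M i) a * pr μ (fun ω (j : s) => M j ω) g := by
  -- `{M i = a}` and `{M_s = g}` are rectangles whose nontrivial sides lie in `{i}` and in `s`.
  refine pr_pair_comp_pi_eq_mul μ M hμ1 hlaw (fun m => m i) (fun m (j : s) => m j) a g
    (fun j x => ∀ h : i = j, h ▸ a = x) (fun j x => ∀ h : j ∈ s, x = g ⟨j, h⟩) ?_ ?_ ?_
  · intro m
    constructor
    · rintro rfl j rfl
      rfl
    · exact fun h => (h i rfl).symm
  · intro m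
    simp [funext_iff]
  · intro j
    by_cases hij : i = j
    · subst hij
      exact Or.inr fun x h => absurd h hi
    · exact Or.inl fun x h => absurd h hij

end Coordinates

end Entropy

/-- In a zero-error perfectly secure index code with a common key only, the entropy of the
common key is at least the entropy of each message. -/
theorem key_entropy_ge_message_entropy
    {Ω : Type} [Fintype Ω] (μ : Ω → ℝ) (hμ0 : ∀ ω, 0 ≤ μ ω) (hμ1 : ∑ ω, μ ω = 1)
    (t : ℕ) (𝓜 : Fin t → Type) [∀ i, Fintype (𝓜 i)]
    (𝒦 𝒞 : Type) [Fintype 𝒦] [Fintype 𝒞]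
    (M : ∀ i, Ω → 𝓜 i) (K : Ω → 𝒦) (C : Ω → 𝒞)
    (hind : ∀ (m : ∀ i, 𝓜 i) (k : 𝒦),
      pr μ (fun ω => ((fun i => M i ω), K ω)) (m, k)
        = (∏ i, pr μ (M i) (m i)) * pr μ K k)
    (hsec : mi μ (fun ω i => M i ω) C = 0)
    (S : Fin t → Finset (Fin t)) (hS : ∀ i, i ∉ S i)
    (hdec : ∀ i : Fin t,
      condH μ (M i) (fun ω => (C ω, (fun j : {x // x ∈ S i} => M j.1 ω), K ω)) = 0) :
    ∀ i : Fin t, entH μ (M i) ≤ entH μ K := by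
  intro i
  have hlaw : ∀ m, pr μ (fun ω j => M j ω) m = ∏ j, pr μ (M j) (m j) :=
    pr_eq_of_pr_pair_eq_mul μ hμ1 (fun ω j => M j ω) K _ hind
  refine entH_le_entH_of_perfect_secrecy μ hμ0 hμ1 (M i) (fun ω (j : S i) => M j ω) C K
    ?_ ?_ (hdec i)
  · exact mi_eq_zero_of_indep μ hμ1 (M i) (fun ω (j : S i) => M j ω)
      (pr_coord_restrict_eq_mul μ M hμ1 hlaw (hS i))
  · exact mi_comp_eq_zero μ hμ0 hμ1 (fun ω j => M j ω) C (fun m => (m i, fun j : S i => m j))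
      hsec
end

section
/- Let M, K, C be random variables taking values in finite sets such that I(M;K) = 0 and I(M;C) = 0. Then H(K) ≥ I(M;C|K). -/
/-!
Expanding, `I(M;C|K) = H(M,K) + H(C,K) - H(K) - H(M,C,K)`. Subadditivity bounds `H(M,K)` and
`H(C,K)` by `H(M) + H(K)` and `H(C) + H(K)`, and monotonicity bounds `H(M,C,K)` below by `H(M,C)`,
so `I(M;C|K) ≤ I(M;C) + H(K)`; perfect secrecy `I(M;C) = 0` gives the claim.
-/

open scoped BigOperators

open Real

lemma mul_log_le_mul_log_of_le {p x : ℝ} (hp : 0 ≤ p) (hpx : p ≤ x) : p * log p ≤ p * log x := by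
  rcases hp.eq_or_lt with rfl | hp
  · simp
  · exact mul_le_mul_of_nonneg_left (log_le_log hp hpx) hp.le

-- Gibbs' inequality for one term: `log t ≤ t - 1` at `t = x * y / p`.
lemma mul_log_add_mul_log_sub_mul_log_le {p x y : ℝ} (hp : 0 ≤ p) (hpx : p ≤ x) (hpy : p ≤ y) :
    p * log x + p * log y - p * log p ≤ x * y - p := by
  rcases hp.eq_or_lt with rfl | hp
  · simpa using mul_nonneg hpx hpy
  have hx := hp.trans_le hpx
  have hy := hp.trans_le hpy
  calc p * log x + p * log y - p * log p = p * log (x * y / p) := by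
        rw [log_div (by positivity) hp.ne', log_mul hx.ne' hy.ne']; ring
    _ ≤ p * (x * y / p - 1) := by gcongr; exact log_le_sub_one_of_pos (by positivity)
    _ = x * y - p := by field_simp

namespace Entropy

variable {Ω A B : Type*} [Fintype Ω] (μ : Ω → ℝ)

lemma pr_eq_sum_filter [DecidableEq A] (X : Ω → A) (a : A) :
    pr μ X a = ∑ ω with X ω = a, μ ω := by
  rw [pr, Finset.sum_filter]
  simp [Set.indicator_apply]

lemma pr_nonneg {μ : Ω → ℝ} (hμ : ∀ ω, 0 ≤ μ ω) (X : Ω → A) (a : A) : 0 ≤ pr μ X a := by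
  classical
  rw [pr_eq_sum_filter]
  exact Finset.sum_nonneg fun ω _ => hμ ω

lemma sum_pr [Fintype A] (X : Ω → A) : ∑ a, pr μ X a = ∑ ω, μ ω := by
  classical
  simp only [pr_eq_sum_filter]
  exact Finset.sum_fiberwise _ _ _

lemma sum_pr_pair_right [Fintype B] (X : Ω → A) (Y : Ω → B) (a : A) :
    ∑ b, pr μ (fun ω => (X ω, Y ω)) (a, b) = pr μ X a := by
  classical
  simp only [pr_eq_sum_filter, Prod.mk.injEq, ← Finset.filter_filter]
  exact Finset.sum_fiberwise _ _ _

lemma sum_pr_pair_left [Fintype A] (X : Ω → A) (Y : Ω → B) (b : B) :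
    ∑ a, pr μ (fun ω => (X ω, Y ω)) (a, b) = pr μ Y b := by
  classical
  simp only [pr_eq_sum_filter, Prod.mk.injEq, and_comm (a := X _ = _), ← Finset.filter_filter]
  exact Finset.sum_fiberwise _ _ _

lemma pr_pair_le_left [Fintype B] {μ : Ω → ℝ} (hμ : ∀ ω, 0 ≤ μ ω)
    (X : Ω → A) (Y : Ω → B) (a : A) (b : B) :
    pr μ (fun ω => (X ω, Y ω)) (a, b) ≤ pr μ X a := by
  rw [← sum_pr_pair_right μ X Y a]
  exact Finset.single_le_sum (fun b' _ => pr_nonneg hμ _ (a, b')) (Finset.mem_univ b)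

lemma pr_pair_le_right [Fintype A] {μ : Ω → ℝ} (hμ : ∀ ω, 0 ≤ μ ω)
    (X : Ω → A) (Y : Ω → B) (a : A) (b : B) :
    pr μ (fun ω => (X ω, Y ω)) (a, b) ≤ pr μ Y b := by
  rw [← sum_pr_pair_left μ X Y b]
  exact Finset.single_le_sum (fun a' _ => pr_nonneg hμ _ (a', b)) (Finset.mem_univ a)

variable [Fintype A] [Fintype B]

lemma entH_pair (X : Ω → A) (Y : Ω → B) :
    entH μ (fun ω => (X ω, Y ω)) =
      -∑ a, ∑ b, pr μ (fun ω => (X ω, Y ω)) (a, b) * log (pr μ (fun ω => (X ω, Y ω)) (a, b)) := by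
  rw [entH, Fintype.sum_prod_type]

lemma entH_eq_sum_pr_pair_left (X : Ω → A) (Y : Ω → B) :
    entH μ X = -∑ a, ∑ b, pr μ (fun ω => (X ω, Y ω)) (a, b) * log (pr μ X a) := by
  simp only [entH, ← Finset.sum_mul, sum_pr_pair_right]

lemma entH_eq_sum_pr_pair_right (X : Ω → A) (Y : Ω → B) :
    entH μ Y = -∑ a, ∑ b, pr μ (fun ω => (X ω, Y ω)) (a, b) * log (pr μ Y b) := by
  rw [Finset.sum_comm]
  simp only [entH, ← Finset.sum_mul, sum_pr_pair_left]

theorem entH_le_entH_pair {μ : Ω → ℝ} (hμ : ∀ ω, 0 ≤ μ ω) (X : Ω → A) (Y : Ω → B) :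
    entH μ X ≤ entH μ (fun ω => (X ω, Y ω)) := by
  rw [entH_eq_sum_pr_pair_left μ X Y, entH_pair, neg_le_neg_iff]
  exact Finset.sum_le_sum fun a _ => Finset.sum_le_sum fun b _ =>
    mul_log_le_mul_log_of_le (pr_nonneg hμ _ _) (pr_pair_le_left hμ X Y a b)

theorem entH_pair_le_add {μ : Ω → ℝ} (hμ : ∀ ω, 0 ≤ μ ω) (hμ1 : ∑ ω, μ ω = 1)
    (X : Ω → A) (Y : Ω → B) :
    entH μ (fun ω => (X ω, Y ω)) ≤ entH μ X + entH μ Y := by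
  have hgibbs := Finset.sum_le_sum fun a (_ : a ∈ Finset.univ) =>
    Finset.sum_le_sum fun b (_ : b ∈ Finset.univ) =>
      mul_log_add_mul_log_sub_mul_log_le (pr_nonneg hμ (fun ω => (X ω, Y ω)) (a, b))
        (pr_pair_le_left hμ X Y a b) (pr_pair_le_right hμ X Y a b)
  have hsum : ∑ a, ∑ b, (pr μ X a * pr μ Y b - pr μ (fun ω => (X ω, Y ω)) (a, b)) = 0 := by
    simp only [Finset.sum_sub_distrib, ← Finset.mul_sum, ← Fintype.sum_prod_type,
      sum_pr, hμ1, mul_one, sub_self]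
  rw [hsum] at hgibbs
  simp only [Finset.sum_sub_distrib, Finset.sum_add_distrib] at hgibbs
  rw [entH_eq_sum_pr_pair_left μ X Y, entH_eq_sum_pr_pair_right μ X Y, entH_pair]
  linarith

theorem cmi_le_mi_add_entH {D : Type*} [Fintype D] {μ : Ω → ℝ} (hμ : ∀ ω, 0 ≤ μ ω)
    (hμ1 : ∑ ω, μ ω = 1) (X : Ω → A) (Y : Ω → B) (Z : Ω → D) :
    cmi μ X Y Z ≤ mi μ X Y + entH μ Z := by
  have hXZ := entH_pair_le_add hμ hμ1 X Z
  have hYZ := entH_pair_le_add hμ hμ1 Y Z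
  have hXY := entH_le_entH_pair hμ (fun ω => (X ω, Y ω)) Z
  simp only [cmi, condH, mi]
  linarith

end Entropy

theorem key_entropy_ge_cond_mutual_info_general
    {Ω : Type} [Fintype Ω] (μ : Ω → ℝ) (hμ0 : ∀ ω, 0 ≤ μ ω) (hμ1 : ∑ ω, μ ω = 1)
    (𝓜 𝒦 𝒞 : Type) [Fintype 𝓜] [Fintype 𝒦] [Fintype 𝒞]
    (M : Ω → 𝓜) (K : Ω → 𝒦) (C : Ω → 𝒞)
    (hMC : mi μ M C = 0) :
    cmi μ M C K ≤ entH μ K := by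
  simpa [hMC] using Entropy.cmi_le_mi_add_entH hμ0 hμ1 M C K

/-- If `M` is independent of `K` and `M` is independent of `C` (perfect secrecy), then
`H(K) ≥ I(M;C|K)`. -/
theorem key_entropy_ge_cond_mutual_info
    {Ω : Type} [Fintype Ω] (μ : Ω → ℝ) (hμ0 : ∀ ω, 0 ≤ μ ω) (hμ1 : ∑ ω, μ ω = 1)
    (𝓜 𝒦 𝒞 : Type) [Fintype 𝓜] [Fintype 𝒦] [Fintype 𝒞]
    (M : Ω → 𝓜) (K : Ω → 𝒦) (C : Ω → 𝒞)
    (hMK : mi μ M K = 0) (hMC : mi μ M C = 0) :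
    cmi μ M C K ≤ entH μ K :=
  key_entropy_ge_cond_mutual_info_general μ hμ0 hμ1 𝓜 𝒦 𝒞 M K C hMC
end

section
/- Let ℳ, 𝒦, 𝒞 be finite sets and f : ℳ × 𝒦 → 𝒞 a function. Let M and K be independent random variables with M of full support on ℳ and K of full support on 𝒦, and set C = f(M,K). If C is independent of M, then the range of f has at most |𝒦| elements. -/
/-!
Every value `c = f (m, k)` has positive probability under `C`, because `(M, K)` hits `(m, k)`
with probability `P(M = m) P(K = k) > 0`. Independence of `M` and `C` then makes
`{M = m₀, C = c}` a positive-probability event for any fixed `m₀`, so `c = f (m₀, K ω)` for some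
`ω`. Hence `range f ⊆ range (f (m₀, ·))`, which has at most `|𝒦|` elements.
-/

open scoped BigOperators

lemma pr_pos_iff {Ω A : Type*} [Fintype Ω] {μ : Ω → ℝ} (hμ0 : ∀ ω, 0 ≤ μ ω)
    (X : Ω → A) (a : A) : 0 < pr μ X a ↔ ∃ ω, X ω = a ∧ 0 < μ ω := by
  rw [pr, Finset.sum_pos_iff_of_nonneg fun ω _ => Set.indicator_nonneg (fun ω _ => hμ0 ω) ω]
  refine exists_congr fun ω => ?_
  by_cases h : X ω = a <;> simp [h, Set.indicator_of_mem, Set.indicator_of_notMem]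

lemma pr_comp_pos {Ω A B : Type*} [Fintype Ω] {μ : Ω → ℝ} (hμ0 : ∀ ω, 0 ≤ μ ω)
    {X : Ω → A} {a : A} (g : A → B) (h : 0 < pr μ X a) :
    0 < pr μ (fun ω => g (X ω)) (g a) := by
  obtain ⟨ω, rfl, hω⟩ := (pr_pos_iff hμ0 X a).1 h
  exact (pr_pos_iff hμ0 _ _).2 ⟨ω, rfl, hω⟩

lemma card_range_le_of_range_subset_range_curry {α β γ : Type*} [Finite β] (f : α × β → γ)
    (h : ∀ a, Set.range f ⊆ Set.range (Function.curry f a)) :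
    Nat.card (Set.range f) ≤ Nat.card β := by
  cases isEmpty_or_nonempty α with
  | inl => simp [Set.range_eq_empty]
  | inr hα =>
    obtain ⟨a⟩ := hα
    exact (Nat.card_mono (Set.toFinite _) (h a)).trans (Finite.card_range_le _)

theorem range_card_le_key_card_general
    {Ω : Type} [Fintype Ω] (μ : Ω → ℝ) (hμ0 : ∀ ω, 0 ≤ μ ω)
    (𝓜 𝒦 𝒞 : Type) [Fintype 𝒦]
    (f : 𝓜 × 𝒦 → 𝒞) (M : Ω → 𝓜) (K : Ω → 𝒦)
    (hMfull : ∀ m, 0 < pr μ M m) (hKfull : ∀ k, 0 < pr μ K k)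
    (hMK : ∀ (m : 𝓜) (k : 𝒦),
      pr μ (fun ω => (M ω, K ω)) (m, k) = pr μ M m * pr μ K k)
    (hMC : ∀ (m : 𝓜) (c : 𝒞),
      pr μ (fun ω => (M ω, f (M ω, K ω))) (m, c)
        = pr μ M m * pr μ (fun ω => f (M ω, K ω)) c) :
    Nat.card (Set.range f) ≤ Fintype.card 𝒦 := by
  rw [← Nat.card_eq_fintype_card]
  refine card_range_le_of_range_subset_range_curry f fun m₀ => ?_
  rintro _ ⟨mk, rfl⟩
  have hmk : 0 < pr μ (fun ω => (M ω, K ω)) mk := by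
    rw [hMK]; exact mul_pos (hMfull _) (hKfull _)
  have hm₀c : 0 < pr μ (fun ω => (M ω, f (M ω, K ω))) (m₀, f mk) := by
    rw [hMC]; exact mul_pos (hMfull m₀) (pr_comp_pos hμ0 f hmk)
  obtain ⟨ω, hω, -⟩ := (pr_pos_iff hμ0 _ _).1 hm₀c
  obtain ⟨hM, hC⟩ := Prod.mk.inj hω
  exact ⟨K ω, by rw [Function.curry_apply, ← hM]; exact hC⟩

/-- If `C = f(M,K)` is independent of `M`, where `M` and `K` are independent with full
support, then the range of `f` has at most `|𝒦|` elements. -/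
theorem range_card_le_key_card
    {Ω : Type} [Fintype Ω] (μ : Ω → ℝ) (hμ0 : ∀ ω, 0 ≤ μ ω) (hμ1 : ∑ ω, μ ω = 1)
    (𝓜 𝒦 𝒞 : Type) [Fintype 𝓜] [Fintype 𝒦] [Fintype 𝒞]
    (f : 𝓜 × 𝒦 → 𝒞) (M : Ω → 𝓜) (K : Ω → 𝒦)
    (hMfull : ∀ m, 0 < pr μ M m) (hKfull : ∀ k, 0 < pr μ K k)
    (hMK : ∀ (m : 𝓜) (k : 𝒦),
      pr μ (fun ω => (M ω, K ω)) (m, k) = pr μ M m * pr μ K k)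
    (hMC : ∀ (m : 𝓜) (c : 𝒞),
      pr μ (fun ω => (M ω, f (M ω, K ω))) (m, c)
        = pr μ M m * pr μ (fun ω => f (M ω, K ω)) c) :
    Nat.card (Set.range f) ≤ Fintype.card 𝒦 :=
  range_card_le_key_card_general μ hμ0 𝓜 𝒦 𝒞 f M K hMfull hKfull hMK hMC
end

section
/- Fix an index coding instance and suppose there is a conventional zero-error index code with encoder f : ∏_i ℳ_i → 𝒞 and decoders g_i, where the code alphabet 𝒞 is endowed with the structure of a finite group. Then there is a zero-error perfectly secure index code for the same instance with the same message alphabets, common key alphabet 𝒦 = 𝒞, trivial private keys and trivial private randomness, and code alphabet 𝒞: explicitly, the encoder (m,k) ↦ f(m)·k with decoders (c, s, k) ↦ g_i(c·k^{-1}, s) is zero-error and perfectly secure, and its rate vector is (r_1,…,r_t, 1, 0,…,0) where r_i = log|ℳ_i|/log|𝒞|. -/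
theorem Nat.card_subtype_mul_eq_one {G : Type*} [Group G] (a c : G) :
    Nat.card {k : G // a * k = c} = 1 := by
  simp only [← eq_inv_mul_iff_mul_eq, Nat.card_unique]

theorem one_time_pad_index_code_general
    (t : ℕ) (S : Fin t → Finset (Fin t))
    (𝓜 : Fin t → Type)
    (C : Type) [Group C] [Fintype C] (hC : 2 ≤ Fintype.card C)
    (f : (∀ i, 𝓜 i) → C)
    (g : ∀ i : Fin t, C → (∀ j : {x // x ∈ S i}, 𝓜 j.1) → 𝓜 i)
    (hzero : ∀ (m : ∀ i, 𝓜 i) (i : Fin t), g i (f m) (fun j => m j.1) = m i) :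
    (∀ (m : ∀ i, 𝓜 i) (k : C) (i : Fin t),
      g i ((f m * k) * k⁻¹) (fun j => m j.1) = m i) ∧
    (∀ (m m' : ∀ i, 𝓜 i) (c : C),
      Nat.card {k : C // f m * k = c} = Nat.card {k : C // f m' * k = c}) ∧
    Real.log (Fintype.card C) / Real.log (Fintype.card C) = 1 :=
  ⟨fun m k i => by rw [mul_inv_cancel_right, hzero],
    fun m m' c => by rw [Nat.card_subtype_mul_eq_one, Nat.card_subtype_mul_eq_one],
    div_self (Real.log_pos (Nat.one_lt_cast.mpr hC)).ne'⟩

/-- **One-time pad on top of a conventional index code.**  Given a conventional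
zero-error index code whose code alphabet `C` is a finite group (encoder `f`,
decoders `g i`), the code with common key alphabet `C`, encoder `(m,k) ↦ f m * k` and
decoders `(c,s,k) ↦ g i (c * k⁻¹) s` is zero-error and perfectly secure (with a uniform
common key, the distribution of the code symbol does not depend on the message tuple —
expressed here by equality of the counts of keys producing each code symbol), and its
common key rate `log|𝒦| / log|𝒞|` equals `1` (message rates are unchanged and private
key rates are `0`). -/
theorem one_time_pad_index_code
    (t : ℕ) (S : Fin t → Finset (Fin t)) (hS : ∀ i, i ∉ S i)
    (𝓜 : Fin t → Type) [∀ i, Fintype (𝓜 i)] [∀ i, Nonempty (𝓜 i)]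
    (C : Type) [Group C] [Fintype C] (hC : 2 ≤ Fintype.card C)
    (f : (∀ i, 𝓜 i) → C)
    (g : ∀ i : Fin t, C → (∀ j : {x // x ∈ S i}, 𝓜 j.1) → 𝓜 i)
    (hzero : ∀ (m : ∀ i, 𝓜 i) (i : Fin t), g i (f m) (fun j => m j.1) = m i) :
    (∀ (m : ∀ i, 𝓜 i) (k : C) (i : Fin t),
      g i ((f m * k) * k⁻¹) (fun j => m j.1) = m i) ∧
    (∀ (m m' : ∀ i, 𝓜 i) (c : C),
      Nat.card {k : C // f m * k = c} = Nat.card {k : C // f m' * k = c}) ∧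
    Real.log (Fintype.card C) / Real.log (Fintype.card C) = 1 :=
  one_time_pad_index_code_general t S 𝓜 C hC f g hzero
end
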